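/- Let Π be an ergodic invariant point process of finite intensity on a unimodular lcsc group G that concentrates on a single orbit, i.e. there exists Ω ∈ M₀ with P[Π ∈ G·Ω] = 1. Then the stabilizer Γ = Stab_G(Ω) is a lattice in G, and Π is (a thickening of) the corresponding lattice shift process. -/

import Mathlib

open MeasureTheory Set Filter Topology
open scoped ENNReal Pointwise

noncomputable section

/-- Left translation of a configuration. -/
def shift {G : Type*} [Mul G] (g : G) (ω : Set G) : Set G := (g * ·) '' ω

/-- The σ-algebra on the configuration space `Set G`, generated by the point-counting
functions `ω ↦ |ω ∩ U|` for Borel `U`. -/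
instance configMS (G : Type*) [MeasurableSpace G] : MeasurableSpace (Set G) :=
  MeasurableSpace.generateFrom
    {A : Set (Set G) | ∃ (U : Set G) (n : ℕ∞), MeasurableSet U ∧ A = {ω | (ω ∩ U).encard = n}}

/-- The expected number of points of the process in `U`. -/
def expCount {G : Type*} [MeasurableSpace G] (μ : Measure (Set G)) (U : Set G) : ℝ≥0∞ :=
  ∫⁻ ω, ((ω ∩ U).encard : ℝ≥0∞) ∂μ

/-- The space of rooted configurations. -/
def rooted (G : Type*) [One G] : Set (Set G) := {ω | (1 : G) ∈ ω}

/-- The Palm measure (relative to a reference set `U` of unit Haar volume) of a set `A`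
of rooted configurations. -/
def palmSet {G : Type*} [Group G] [MeasurableSpace G] (μ : Measure (Set G)) (U : Set G)
    (A : Set (Set G)) : ℝ≥0∞ :=
  (expCount μ U)⁻¹ * ∫⁻ ω, (({g ∈ U | shift g⁻¹ ω ∈ A}).encard : ℝ≥0∞) ∂μ

/-- The Palm expectation (relative to a reference set `U` of unit Haar volume) of a
function `h` of rooted configurations. -/
def palmLintegral {G : Type*} [Group G] [MeasurableSpace G] (μ : Measure (Set G)) (U : Set G)
    (h : Set G → ℝ≥0∞) : ℝ≥0∞ :=
  (expCount μ U)⁻¹ * ∫⁻ ω, ∑' x : ↥(ω ∩ U), h (shift (x : G)⁻¹ ω) ∂μ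

/-!
Let `Γ` be the stabilizer of `Ω`. Almost surely the process is closed, discrete and a translate
of `Ω`, so `Ω` is closed and discrete, and so is `Γ ⊆ Ω`. The translations `y` with `y • Ω = ω`
form a left coset `y Γ`, and their expected counting measure `ν A = 𝔼 #{y ∈ A | y • Ω = ω}` is left
invariant (because the process is) and finite on compacts (a small open set meets each coset at
most once), hence `ν = c • haar`. A Borel transversal `D` of `G ⧸ Γ` meets every such coset
exactly once, so `c * haar D = ν D = 1`: `Γ` is a lattice. If `x₁, …, x_k ∈ Ω` lie in distinct
cosets `Γ xᵢ`, the points `y * xᵢ ∈ ω ∩ U` are distinct, so by right invariance of Haar measure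
`k * c = ∑ ν (U xᵢ⁻¹) ≤ 𝔼 #(ω ∩ U) < ∞`, and `Ω` is a finite union of cosets `Γ f`.
Measurability of `ν` rests on the Lusin–Souslin theorem.
-/

section Shift

variable {G : Type*}

lemma shift_eq_smul [Group G] (g : G) (ω : Set G) : shift g ω = g • ω := rfl

lemma encard_smul_inter [Group G] (g : G) (ω U : Set G) :
    (g • ω ∩ U).encard = (ω ∩ g⁻¹ • U).encard := by
  rw [← encard_smul_set g⁻¹, smul_set_inter, inv_smul_smul]

lemma measurableSet_setOf_encard_inter_eq [MeasurableSpace G] {U : Set G} (hU : MeasurableSet U)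
    (n : ℕ∞) : MeasurableSet {ω : Set G | (ω ∩ U).encard = n} :=
  MeasurableSpace.measurableSet_generateFrom ⟨U, n, hU, rfl⟩

lemma measurableSet_setOf_inter_nonempty [MeasurableSpace G] {U : Set G} (hU : MeasurableSet U) :
    MeasurableSet {ω : Set G | (ω ∩ U).Nonempty} := by
  simp_rw [← encard_ne_zero]
  exact (measurableSet_setOf_encard_inter_eq hU 0).compl

lemma measurable_shift [Group G] [MeasurableSpace G] [MeasurableMul G] (g : G) :
    Measurable (shift g) := by
  refine measurable_generateFrom ?_
  rintro _ ⟨U, n, hU, rfl⟩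
  simp only [preimage_ofPred_eq, shift_eq_smul, encard_smul_inter]
  exact measurableSet_setOf_encard_inter_eq (hU.const_smul _) n

lemma lintegral_comp_shift [Group G] [MeasurableSpace G] [MeasurableMul G] {μ : Measure (Set G)}
    {g : G} (hμ : μ.map (shift g) = μ) {f : Set G → ℝ≥0∞} (hf : Measurable f) :
    ∫⁻ ω, f (g • ω) ∂μ = ∫⁻ ω, f ω ∂μ := by
  conv_rhs => rw [← hμ]
  exact (lintegral_map hf (measurable_shift g)).symm

variable [Group G] [TopologicalSpace G] [IsTopologicalGroup G] [MeasurableSpace G]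

lemma isClosed_isDiscrete_of_orbit {μ : Measure (Set G)} {Ω : Set G}
    (hsupp : ∀ᵐ ω ∂μ, IsClosed ω ∧ DiscreteTopology ↥ω)
    (horbit : μ {ω | ∃ g : G, ω = shift g Ω} ≠ 0) : IsClosed Ω ∧ IsDiscrete Ω := by
  obtain ⟨_, ⟨g, rfl⟩, hc, hd⟩ := ((frequently_ae_mem_iff.2 horbit).and_eventually hsupp).exists
  rw [← inv_smul_smul g Ω]
  exact ⟨hc.smul _, (isDiscrete_iff_discreteTopology.2 hd).image (Homeomorph.smul g⁻¹).isInducing⟩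

end Shift

section General

lemma IsClosed.isClosed_singleton_of_isDiscrete {X : Type*} [TopologicalSpace X] {S : Set X}
    (hS : IsClosed S) (hd : IsDiscrete S) {x : X} (hx : x ∈ S) : IsClosed ({x} : Set X) := by
  have := isDiscrete_iff_discreteTopology.1 hd
  simpa using hS.isClosedEmbedding_subtypeVal.isClosedMap _ (isClosed_discrete {(⟨x, hx⟩ : S)})

lemma IsDiscrete.countable {X : Type*} [TopologicalSpace X] [SecondCountableTopology X]
    {S : Set X} (hd : IsDiscrete S) : S.Countable :=
  have := isDiscrete_iff_discreteTopology.1 hd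
  countable_coe_iff.1 (TopologicalSpace.separableSpace_iff_countable.1 inferInstance)

open scoped Classical in
lemma Set.Subsingleton.count_eq {α : Type*} [MeasurableSpace α] [MeasurableSingletonClass α]
    {s : Set α} (hs : s.Subsingleton) : Measure.count s = if s.Nonempty then 1 else 0 := by
  rcases hs.eq_empty_or_singleton with rfl | ⟨a, rfl⟩ <;> simp

lemma Set.finite_of_forall_finset_card_mul_le {α : Type*} {u : Set α} {c E : ℝ≥0∞} (hc : c ≠ 0)
    (hE : E ≠ ⊤) (h : ∀ t : Finset α, ↑t ⊆ u → t.card * c ≤ E) : u.Finite := by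
  by_contra hu
  obtain ⟨n, hn⟩ := ENNReal.exists_nat_gt (ENNReal.div_lt_top hE hc).ne
  obtain ⟨t, htu, rfl⟩ := Set.Infinite.exists_subset_card_eq hu n
  exact (h t htu).not_gt ((ENNReal.div_lt_iff (Or.inl hc) (Or.inr hE)).1 hn)

lemma bijOn_iUnion_inter_preimage_disjointed {α β : Type*} {f : α → β} {V : ℕ → Set α}
    (hinj : ∀ n, InjOn f (V n)) (hcover : ⋃ n, f '' V n = univ) :
    BijOn f (⋃ n, V n ∩ f ⁻¹' disjointed (fun n => f '' V n) n) univ := by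
  refine ⟨mapsTo_univ _ _, ?_, ?_⟩
  · rintro x hx x' hx' hxx'
    obtain ⟨n, hxV, hxd⟩ := mem_iUnion.1 hx
    obtain ⟨k, hx'V, hx'd⟩ := mem_iUnion.1 hx'
    obtain rfl : n = k := by
      by_contra hne
      have hx'd' : f x ∈ disjointed (fun n => f '' V n) k := hxx' ▸ hx'd
      exact disjoint_left.1 (disjoint_disjointed _ hne) hxd hx'd'
    exact hinj n hxV hx'V hxx'
  · intro y _
    obtain ⟨n, hn⟩ := mem_iUnion.1 ((iUnion_disjointed.trans hcover).symm ▸ mem_univ y)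
    obtain ⟨x, hx, rfl⟩ := disjointed_subset _ n hn
    exact ⟨x, mem_iUnion.2 ⟨n, hx, hn⟩, rfl⟩

end General

section Cosets

open MulAction

variable {G : Type*} [Group G]

lemma stabilizer_subset_of_one_mem {Ω : Set G} (h : (1 : G) ∈ Ω) :
    (stabilizer G Ω : Set G) ⊆ Ω := fun γ hγ => by
  have := smul_mem_smul_set (a := γ) h
  rwa [smul_eq_mul, mul_one, mem_stabilizer_iff.1 hγ] at this

lemma Set.BijOn.existsUnique_inv_mul_mem {Γ : Subgroup G} {D : Set G}
    (hD : BijOn ((↑) : G → G ⧸ Γ) D univ) (g : G) : ∃! x : G, x ∈ D ∧ x⁻¹ * g ∈ Γ := by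
  obtain ⟨x, hxD, hx⟩ := hD.surjOn (mem_univ (g : G ⧸ Γ))
  exact ⟨x, ⟨hxD, QuotientGroup.eq.1 hx⟩, fun y hy =>
    hD.injOn hy.1 hxD ((QuotientGroup.eq.2 hy.2).trans hx.symm)⟩

lemma exists_finset_eq_stabilizer_mul {Ω : Set G}
    (h : ∀ u ⊆ Ω, InjOn (Quotient.mk (QuotientGroup.rightRel (stabilizer G Ω))) u → u.Finite) :
    ∃ F : Finset G, Ω = {x : G | ∃ γ ∈ stabilizer G Ω, ∃ f ∈ F, x = γ * f} := by
  obtain ⟨u, huΩ, hu⟩ :=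
    exists_subset_bijOn Ω (Quotient.mk (QuotientGroup.rightRel (stabilizer G Ω)))
  have hfin := h u huΩ hu.injOn
  refine ⟨hfin.toFinset, ext fun x => ⟨fun hx => ?_, ?_⟩⟩
  · obtain ⟨f, hfu, hf⟩ := hu.surjOn (mem_image_of_mem _ hx)
    exact ⟨x * f⁻¹, QuotientGroup.rightRel_apply.1 (Quotient.exact hf), f,
      hfin.mem_toFinset.2 hfu, by group⟩
  · rintro ⟨γ, hγ, f, hf, rfl⟩
    rw [← mem_stabilizer_iff.1 hγ]
    exact smul_mem_smul_set (huΩ (hfin.mem_toFinset.1 hf))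

variable [TopologicalSpace G] [IsTopologicalGroup G]

lemma exists_open_cover_injOn_mk [LocallyCompactSpace G] [SecondCountableTopology G]
    {Γ : Subgroup G} (hΓ : IsDiscrete (Γ : Set G)) :
    ∃ V : ℕ → Set G, (∀ n, IsOpen (V n)) ∧ (∀ n, ∃ K, IsCompact K ∧ V n ⊆ K) ∧
      (∀ n, InjOn (QuotientGroup.mk : G → G ⧸ Γ) (V n)) ∧ ⋃ n, V n = univ := by
  obtain ⟨U, hU, -, hUΓ⟩ := hΓ.exists_nhds_eq_one_of_image_mulRight_inter_nonempty Γ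
  obtain ⟨K, hK, hK1⟩ := exists_compact_mem_nhds (1 : G)
  set W := interior (U ∩ K)
  have hW1 : (1 : G) ∈ W := mem_interior_iff_mem_nhds.2 (inter_mem hU hK1)
  obtain ⟨u, hu⟩ := TopologicalSpace.exists_dense_seq G
  refine ⟨fun n => u n • W, fun n => isOpen_interior.smul _,
    fun n => ⟨u n • K, hK.smul _, smul_set_mono (interior_subset.trans inter_subset_right)⟩,
    fun n => ?_, eq_univ_of_forall fun x => ?_⟩
  · rintro _ ⟨w, hw, rfl⟩ _ ⟨w', hw', rfl⟩ h
    have hγ : w⁻¹ * w' ∈ Γ := by simpa [mul_assoc] using QuotientGroup.eq.1 h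
    have hU' : ((· * (w⁻¹ * w')) '' U ∩ U).Nonempty :=
      ⟨w', ⟨w, (interior_subset hw).1, by group⟩, (interior_subset hw').1⟩
    simp [inv_mul_eq_one.1 (hUΓ _ hγ hU')]
  · have ho : IsOpen ((fun y : G => y⁻¹ * x) ⁻¹' W) := isOpen_interior.preimage (by fun_prop)
    obtain ⟨n, hn⟩ := hu.exists_mem_open ho ⟨x, by simpa using hW1⟩
    exact mem_iUnion.2 ⟨n, mem_smul_set_iff_inv_smul_mem.2 hn⟩

lemma measurableSet_iUnion_inter_preimage_disjointed [MeasurableSpace G] [BorelSpace G]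
    {Γ : Subgroup G} {V : ℕ → Set G} (hV : ∀ n, IsOpen (V n)) :
    MeasurableSet (⋃ n, V n ∩ (QuotientGroup.mk : G → G ⧸ Γ) ⁻¹'
      disjointed (fun n => (QuotientGroup.mk : G → G ⧸ Γ) '' V n) n) := by
  have hW : ∀ n, MeasurableSet ((QuotientGroup.mk : G → G ⧸ Γ) '' V n) := fun n =>
    measurableSet_quotient.2
      ((QuotientGroup.isOpenMap_coe _ (hV n)).preimage QuotientGroup.continuous_mk).measurableSet
  exact .iUnion fun n => (hV n).measurableSet.inter (MeasurableSet.disjointed hW n)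

end Cosets

section ClosurePattern

open TopologicalSpace

variable {X : Type*} [TopologicalSpace X] [SecondCountableTopology X]

/-- A code of `closure ω` with values in a countably separated measurable space. -/
def closurePattern (ω : Set X) : countableBasis X → Prop := fun b => (ω ∩ b).Nonempty

lemma closurePattern_closure (ω : Set X) : closurePattern (closure ω) = closurePattern ω :=
  funext fun b => propext (closure_inter_open_nonempty_iff (isOpen_of_mem_countableBasis b.2))

lemma closurePattern_eq_iff {S T : Set X} :
    closurePattern S = closurePattern T ↔ closure S = closure T := by
  refine ⟨fun h => ?_, fun h => by rw [← closurePattern_closure, h, closurePattern_closure]⟩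
  have key : ∀ {S T : Set X}, closurePattern S = closurePattern T → closure S ⊆ closure T := by
    intro S T h x hx
    rw [(isBasis_countableBasis X).mem_closure_iff] at hx ⊢
    intro o ho hxo
    have hST : (S ∩ o).Nonempty = (T ∩ o).Nonempty := congrFun h ⟨o, ho⟩
    rw [inter_comm, ← hST, inter_comm]
    exact hx o ho hxo
  exact (key h).antisymm (key h.symm)

lemma measurable_closurePattern [MeasurableSpace X] [OpensMeasurableSpace X] :
    Measurable (closurePattern : Set X → countableBasis X → Prop) :=
  measurable_pi_lambda _ fun b => measurableSet_setOfPred.1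
    (measurableSet_setOf_inter_nonempty (isOpen_of_mem_countableBasis b.2).measurableSet)

lemma measurable_closurePattern_smul [Group X] [IsTopologicalGroup X] [MeasurableSpace X]
    [OpensMeasurableSpace X] (Ω : Set X) : Measurable fun y : X => closurePattern (y • Ω) := by
  refine measurable_pi_lambda _ fun b => measurableSet_setOfPred.1 ?_
  have hb : {y : X | (y • Ω ∩ b).Nonempty} = b * Ω⁻¹ := by
    ext y
    constructor
    · rintro ⟨_, ⟨w, hw, rfl⟩, hyw⟩
      exact ⟨y * w, hyw, w⁻¹, by simpa using hw, by simp⟩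
    · rintro ⟨z, hz, w, hw, rfl⟩
      exact ⟨z, ⟨w⁻¹, hw, by simp⟩, hz⟩
  change MeasurableSet {y : X | (y • Ω ∩ b).Nonempty}
  rw [hb]
  exact (isOpen_of_mem_countableBasis b.2).mul_right.measurableSet

end ClosurePattern

section Positions

open MulAction QuotientGroup

variable {G : Type*} [Group G] [TopologicalSpace G] {Ω ω : Set G}

/-- Using `closure ω` makes this depend on `ω` only through `closurePattern ω`; for closed `ω` it
is `{y | y • Ω = ω}`. -/
def positions (Ω ω : Set G) : Set G := {y | y • Ω = closure ω}

lemma mk_eq_mk_of_mem_positions {y y' : G} (hy : y ∈ positions Ω ω) (hy' : y' ∈ positions Ω ω) :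
    (y : G ⧸ stabilizer G Ω) = y' := by
  rw [QuotientGroup.eq, mem_stabilizer_iff, mul_smul, hy', ← hy, inv_smul_smul]

lemma Set.InjOn.subsingleton_inter_positions {V : Set G}
    (hV : InjOn ((↑) : G → G ⧸ stabilizer G Ω) V) : (V ∩ positions Ω ω).Subsingleton :=
  fun _ hy _ hy' => hV hy.1 hy'.1 (mk_eq_mk_of_mem_positions hy.2 hy'.2)

lemma positions_countable (hΓ : (stabilizer G Ω : Set G).Countable) :
    (positions Ω ω).Countable := by
  rcases (positions Ω ω).eq_empty_or_nonempty with h | ⟨y₀, hy₀⟩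
  · simp [h]
  refine (hΓ.image (y₀ * ·)).mono fun y hy => ?_
  exact ⟨y₀⁻¹ * y, QuotientGroup.eq.1 (mk_eq_mk_of_mem_positions hy₀ hy), mul_inv_cancel_left y₀ y⟩

lemma mul_mem_of_mem_positions (hω : IsClosed ω) {x y : G} (hy : y ∈ positions Ω ω)
    (hx : x ∈ Ω) : y * x ∈ ω := by
  rw [← hω.closure_eq, ← hy]
  exact smul_mem_smul_set hx

variable [IsTopologicalGroup G]

lemma positions_smul (a : G) (ω : Set G) : positions Ω (a • ω) = a • positions Ω ω := by
  ext y
  rw [mem_smul_set_iff_inv_smul_mem, positions, positions, mem_ofPred_eq, mem_ofPred_eq,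
    closure_smul, smul_eq_mul, mul_smul, inv_smul_eq_iff]

lemma mem_positions_smul_self (hΩ : IsClosed Ω) {g y : G} :
    y ∈ positions Ω (g • Ω) ↔ (y : G ⧸ stabilizer G Ω) = g := by
  rw [positions, mem_ofPred_eq, (hΩ.smul g).closure_eq, QuotientGroup.eq, mem_stabilizer_iff,
    mul_smul, inv_smul_eq_iff, eq_comm]

lemma mem_positions_iff_closurePattern [SecondCountableTopology G] (hΩ : IsClosed Ω) {y : G} :
    y ∈ positions Ω ω ↔ closurePattern (y • Ω) = closurePattern ω := by
  rw [closurePattern_eq_iff, (hΩ.smul y).closure_eq]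
  rfl

variable [MeasurableSpace G] [BorelSpace G] [SecondCountableTopology G] [T2Space G]

/-- Lusin–Souslin: the pattern map `y ↦ closurePattern (y • Ω)` is injective on `B`, so it maps
`B` to a Borel set. -/
lemma measurableSet_setOf_inter_positions_nonempty (hΩ : IsClosed Ω) {B K : Set G}
    (hB : MeasurableSet B) (hK : IsCompact K) (hBK : B ⊆ K)
    (hinj : InjOn ((↑) : G → G ⧸ stabilizer G Ω) B) :
    MeasurableSet {ω : Set G | (B ∩ positions Ω ω).Nonempty} := by
  set p : G → _ := fun y => closurePattern (y • Ω)
  have hset : {ω : Set G | (B ∩ positions Ω ω).Nonempty} = closurePattern ⁻¹' (p '' B) := by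
    ext ω
    simp [p, mem_positions_iff_closurePattern hΩ, Set.Nonempty]
  have hpinj : InjOn p B := fun y hy y' hy' h => hinj hy hy'
    (mk_eq_mk_of_mem_positions ((mem_positions_iff_closurePattern hΩ).2 rfl)
      ((mem_positions_iff_closurePattern hΩ).2 h.symm))
  have : CompactSpace K := isCompact_iff_compactSpace.1 hK
  let := TopologicalSpace.metrizableSpaceMetric K
  have hB' : MeasurableSet ((↑) ⁻¹' B : Set K) := measurable_subtype_coe hB
  have himage := hB'.image_of_measurable_injOn
    ((measurable_closurePattern_smul Ω).comp measurable_subtype_coe)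
    (fun a ha b hb hab => Subtype.ext (hpinj ha hb hab))
  rw [image_comp, Subtype.image_preimage_coe, inter_eq_right.2 hBK] at himage
  rw [hset]
  exact measurable_closurePattern himage

end Positions

section PositionMeasure

open MulAction QuotientGroup

variable {G : Type*} [Group G] [TopologicalSpace G] [MeasurableSpace G] {Ω : Set G}

def positionMeasure (Ω ω : Set G) : Measure G := Measure.count.restrict (positions Ω ω)

def positionIntensity (μ : Measure (Set G)) (Ω : Set G) : Measure G :=
  μ.bind (positionMeasure Ω)

lemma positionIntensity_apply {μ : Measure (Set G)} (hκ : Measurable (positionMeasure Ω))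
    {A : Set G} (hA : MeasurableSet A) :
    positionIntensity μ Ω A = ∫⁻ ω, positionMeasure Ω ω A ∂μ :=
  Measure.bind_apply hA hκ.aemeasurable

variable [IsTopologicalGroup G] [BorelSpace G]

lemma positionMeasure_smul_apply {A : Set G} (hA : MeasurableSet A) (a : G) (ω : Set G) :
    positionMeasure Ω (a • ω) A = positionMeasure Ω ω (a⁻¹ • A) := by
  rw [positionMeasure, positionMeasure, Measure.restrict_apply hA,
    Measure.restrict_apply (hA.const_smul _), positions_smul, ← measure_smul _ a⁻¹,
    smul_set_inter, inv_smul_smul]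

lemma isMulLeftInvariant_positionIntensity (hinv : ∀ g : G, μ.map (shift g) = μ)
    (hκ : Measurable (positionMeasure Ω)) : (positionIntensity μ Ω).IsMulLeftInvariant := by
  refine ⟨fun a => Measure.ext fun A hA => ?_⟩
  rw [Measure.map_apply (measurable_const_mul a) hA, positionIntensity_apply hκ hA,
    positionIntensity_apply hκ (measurable_const_mul a hA)]
  change ∫⁻ ω, positionMeasure Ω ω ((a • ·) ⁻¹' A) ∂μ = _
  simp_rw [preimage_smul, ← positionMeasure_smul_apply hA]
  exact lintegral_comp_shift (hinv a) ((Measure.measurable_coe hA).comp hκ)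

open scoped Classical in
lemma measurable_positionMeasure [SecondCountableTopology G] [T2Space G] [LocallyCompactSpace G]
    (hΩ : IsClosed Ω) (hΓ : IsDiscrete (stabilizer G Ω : Set G)) :
    Measurable (positionMeasure Ω) := by
  obtain ⟨V, hVo, hVK, hVinj, hV⟩ := exists_open_cover_injOn_mk hΓ
  refine Measure.measurable_of_measurable_coe _ fun A hA => ?_
  have hAV : ∀ n, MeasurableSet (A ∩ disjointed V n) := fun n =>
    hA.inter (MeasurableSet.disjointed (fun n => (hVo n).measurableSet) n)
  have hsub : ∀ n, A ∩ disjointed V n ⊆ V n := fun n =>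
    inter_subset_right.trans (disjointed_subset V n)
  have hsum : ∀ ω, positionMeasure Ω ω A =
      ∑' n, if (A ∩ disjointed V n ∩ positions Ω ω).Nonempty then 1 else 0 := by
    intro ω
    calc positionMeasure Ω ω A = positionMeasure Ω ω (⋃ n, A ∩ disjointed V n) := by
          rw [← inter_iUnion, iUnion_disjointed, hV, inter_univ]
      _ = ∑' n, positionMeasure Ω ω (A ∩ disjointed V n) :=
          measure_iUnion (fun m n hmn => (disjoint_disjointed V hmn).mono inter_subset_right
            inter_subset_right) hAV
      _ = _ := by
          refine tsum_congr fun n => ?_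
          rw [positionMeasure, Measure.restrict_apply (hAV n)]
          exact (((hVinj n).mono (hsub n)).subsingleton_inter_positions (ω := ω)).count_eq
  simp_rw [hsum]
  refine Measurable.tsum fun n => Measurable.ite ?_ measurable_const measurable_const
  obtain ⟨K, hK, hVK⟩ := hVK n
  exact measurableSet_setOf_inter_positions_nonempty hΩ (hAV n) hK ((hsub n).trans hVK)
    ((hVinj n).mono (hsub n))

end PositionMeasure

section PositionIntensity

open MulAction QuotientGroup

variable {G : Type*} [Group G] [TopologicalSpace G] [MeasurableSpace G] [BorelSpace G]
  [T1Space G] {Ω : Set G} {μ : Measure (Set G)}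

lemma positionIntensity_le_measure_univ (hκ : Measurable (positionMeasure Ω)) {V : Set G}
    (hVm : MeasurableSet V) (hV : InjOn ((↑) : G → G ⧸ stabilizer G Ω) V) :
    positionIntensity μ Ω V ≤ μ univ := by
  rw [positionIntensity_apply hκ hVm, ← lintegral_one]
  refine lintegral_mono fun ω => ?_
  rw [positionMeasure, Measure.restrict_apply hVm, hV.subsingleton_inter_positions.count_eq]
  split_ifs <;> simp

variable [IsTopologicalGroup G]

lemma isFiniteMeasureOnCompacts_positionIntensity [IsFiniteMeasure μ] [LocallyCompactSpace G]
    [SecondCountableTopology G] (hκ : Measurable (positionMeasure Ω))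
    (hΓ : IsDiscrete (stabilizer G Ω : Set G)) :
    IsFiniteMeasureOnCompacts (positionIntensity μ Ω) := by
  obtain ⟨V, hVo, -, hVinj, hV⟩ := exists_open_cover_injOn_mk hΓ
  refine ⟨fun K hK => ?_⟩
  obtain ⟨t, ht⟩ := hK.elim_finite_subcover V hVo (hV ▸ subset_univ K)
  calc positionIntensity μ Ω K ≤ ∑ n ∈ t, positionIntensity μ Ω (V n) :=
        (measure_mono ht).trans (measure_biUnion_finset_le t V)
    _ ≤ ∑ _n ∈ t, μ univ := Finset.sum_le_sum fun n _ =>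
        positionIntensity_le_measure_univ hκ (hVo n).measurableSet (hVinj n)
    _ < ⊤ := by simp [ENNReal.mul_lt_top, measure_lt_top]

lemma positionIntensity_eq_one_of_bijOn [IsProbabilityMeasure μ]
    (hκ : Measurable (positionMeasure Ω)) (hΩ : IsClosed Ω)
    (horbit : μ {ω | ∃ g : G, ω = shift g Ω} = 1) {D : Set G} (hDm : MeasurableSet D)
    (hD : BijOn ((↑) : G → G ⧸ stabilizer G Ω) D univ) : positionIntensity μ Ω D = 1 := by
  refine le_antisymm ((positionIntensity_le_measure_univ hκ hDm hD.injOn).trans_eq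
    measure_univ) ?_
  have horbit_le : {ω | ∃ g : G, ω = shift g Ω} ⊆ {ω | 1 ≤ positionMeasure Ω ω D} := by
    rintro _ ⟨g, rfl⟩
    obtain ⟨x, hxD, hx⟩ := hD.surjOn (mem_univ (g : G ⧸ stabilizer G Ω))
    rw [mem_ofPred_eq, positionMeasure, Measure.restrict_apply hDm, ← Measure.count_singleton x]
    exact measure_mono (singleton_subset_iff.2 ⟨hxD, (mem_positions_smul_self hΩ).2 hx⟩)
  calc 1 = 1 * μ {ω | ∃ g : G, ω = shift g Ω} := by rw [horbit, one_mul]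
    _ ≤ 1 * μ {ω | 1 ≤ positionMeasure Ω ω D} := by gcongr
    _ ≤ ∫⁻ ω, positionMeasure Ω ω D ∂μ :=
        mul_meas_ge_le_lintegral₀ ((Measure.measurable_coe hDm).comp hκ).aemeasurable 1
    _ = positionIntensity μ Ω D := (positionIntensity_apply hκ hDm).symm

/-- Distinct right cosets `Γ x ⊆ Ω` give disjoint sets of points `y * x` of `ω`. -/
lemma sum_positionMeasure_le_encard (hΓ : (stabilizer G Ω : Set G).Countable)
    {t : Finset G} (htΩ : ↑t ⊆ Ω)
    (ht : InjOn (Quotient.mk (QuotientGroup.rightRel (stabilizer G Ω))) t) {ω U : Set G}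
    (hω : IsClosed ω) (hU : MeasurableSet U) :
    ∑ x ∈ t, positionMeasure Ω ω ((· * x) ⁻¹' U) ≤ (ω ∩ U).encard := by
  set A : G → Set G := fun x => (· * x) '' ((· * x) ⁻¹' U ∩ positions Ω ω)
  have hdisj : (t : Set G).PairwiseDisjoint A := by
    intro x hx x' hx' hne
    refine disjoint_left.2 ?_
    rintro _ ⟨y, ⟨-, hy⟩, rfl⟩ ⟨y', ⟨-, hy'⟩, h⟩
    refine hne (ht hx hx' (Quotient.sound (QuotientGroup.rightRel_apply.2 ?_)))
    have hyy' := QuotientGroup.eq.1 (mk_eq_mk_of_mem_positions hy' hy)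
    rwa [show x' * x⁻¹ = y'⁻¹ * y by simp only [eq_inv_mul_iff_mul_eq, ← mul_assoc, h]; group]
  calc ∑ x ∈ t, positionMeasure Ω ω ((· * x) ⁻¹' U) = ∑ x ∈ t, Measure.count (A x) := by
        refine Finset.sum_congr rfl fun x _ => ?_
        rw [positionMeasure, Measure.restrict_apply (measurable_mul_const x hU),
          Measure.count_injective_image (mul_left_injective x)]
    _ = Measure.count (⋃ x ∈ t, A x) := (measure_biUnion_finset hdisj fun x _ =>
        (((positions_countable hΓ).mono inter_subset_right).image _).measurableSet).symm
    _ ≤ Measure.count (ω ∩ U) := measure_mono <| iUnion₂_subset fun x hx =>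
        image_subset_iff.2 fun y hy => ⟨mul_mem_of_mem_positions hω hy.2 (htΩ hx), hy.1⟩
    _ = (ω ∩ U).encard := Measure.count_apply (hω.measurableSet.inter hU)

lemma sum_positionIntensity_le_expCount (hκ : Measurable (positionMeasure Ω))
    (hsupp : ∀ᵐ ω ∂μ, IsClosed ω) (hΓ : (stabilizer G Ω : Set G).Countable) {t : Finset G}
    (htΩ : ↑t ⊆ Ω) (ht : InjOn (Quotient.mk (QuotientGroup.rightRel (stabilizer G Ω))) t)
    {U : Set G} (hU : MeasurableSet U) :
    ∑ x ∈ t, positionIntensity μ Ω ((· * x) ⁻¹' U) ≤ expCount μ U := by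
  simp_rw [positionIntensity_apply hκ (measurable_mul_const _ hU)]
  have hm : ∀ x : G, Measurable fun ω => positionMeasure Ω ω ((· * x) ⁻¹' U) := fun x =>
    (Measure.measurable_coe (measurable_mul_const x hU)).comp hκ
  rw [← lintegral_finsetSum _ fun x _ => hm x]
  exact lintegral_mono_ae (hsupp.mono fun ω hω => sum_positionMeasure_le_encard hΓ htΩ ht hω hU)

end PositionIntensity

theorem statement16_general {G : Type*} [Group G] [TopologicalSpace G] [IsTopologicalGroup G]
    [LocallyCompactSpace G] [SecondCountableTopology G] [MeasurableSpace G] [BorelSpace G]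
    [(Measure.haar : Measure G).IsMulRightInvariant]
    (μ : Measure (Set G)) [IsProbabilityMeasure μ]
    (hsupp : ∀ᵐ ω ∂μ, IsClosed ω ∧ DiscreteTopology ↥ω)
    (hinv : ∀ g : G, μ.map (shift g) = μ)
    (U : Set G) (hU : MeasurableSet U) (hvol : Measure.haar U = 1)
    (hfin : expCount μ U < ⊤)
    (Ω : Set G) (hΩroot : (1 : G) ∈ Ω)
    (horbit : μ {ω | ∃ g : G, ω = shift g Ω} = 1) :
    (∃ H : Subgroup G, (H : Set G) = {g : G | shift g Ω = Ω}) ∧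
      DiscreteTopology ↥{g : G | shift g Ω = Ω} ∧
      (∃ s : Set G, MeasurableSet s ∧ Measure.haar s < ⊤ ∧
        ∀ g : G, ∃! x : G, x ∈ s ∧ x⁻¹ * g ∈ {g : G | shift g Ω = Ω}) ∧
      ∃ F : Finset G, Ω = {x : G | ∃ γ ∈ {g : G | shift g Ω = Ω}, ∃ f ∈ F, x = γ * f} := by
  obtain ⟨hΩc, hΩd⟩ := isClosed_isDiscrete_of_orbit hsupp (horbit ▸ one_ne_zero)
  have : T1Space G :=
    IsTopologicalGroup.t1Space G (hΩc.isClosed_singleton_of_isDiscrete hΩd hΩroot)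
  set Γ := MulAction.stabilizer G Ω
  have hΓ : IsDiscrete (Γ : Set G) := hΩd.mono (stabilizer_subset_of_one_mem hΩroot)
  have hκ := measurable_positionMeasure hΩc hΓ
  have := isMulLeftInvariant_positionIntensity hinv hκ
  have := isFiniteMeasureOnCompacts_positionIntensity (μ := μ) hκ hΓ
  set c : ℝ≥0∞ := ((positionIntensity μ Ω).haarScalarFactor Measure.haar : ℝ≥0∞)
  have hνc : ∀ A, positionIntensity μ Ω A = c * Measure.haar A := fun A => by
    rw [Measure.isMulLeftInvariant_eq_smul (positionIntensity μ Ω) Measure.haar]; rfl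
  obtain ⟨V, hVo, -, hVinj, hV⟩ := exists_open_cover_injOn_mk hΓ
  have hD := bijOn_iUnion_inter_preimage_disjointed hVinj
    (by rw [← image_iUnion, hV, image_univ_of_surjective QuotientGroup.mk_surjective])
  have hDm := measurableSet_iUnion_inter_preimage_disjointed (Γ := Γ) hVo
  have hcD := (hνc _).symm.trans (positionIntensity_eq_one_of_bijOn hκ hΩc horbit hDm hD)
  have hc : c ≠ 0 := left_ne_zero_of_mul_eq_one hcD
  refine ⟨⟨Γ, rfl⟩, isDiscrete_iff_discreteTopology.1 hΓ,
    ⟨_, hDm, lt_top_iff_ne_top.2 fun h => by simp [h, hc] at hcD, hD.existsUnique_inv_mul_mem⟩,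
    exists_finset_eq_stabilizer_mul fun u huΩ hu =>
      finite_of_forall_finset_card_mul_le hc hfin.ne fun t htu => ?_⟩
  calc (t.card : ℝ≥0∞) * c = ∑ x ∈ t, positionIntensity μ Ω ((· * x) ⁻¹' U) := by
        simp [hνc, measure_preimage_mul_right, hvol]
    _ ≤ expCount μ U := sum_positionIntensity_le_expCount hκ (hsupp.mono fun _ h => h.1)
        hΓ.countable (htu.trans huΩ) (hu.mono htu) hU

/-- if an ergodic invariant point process of finite intensity concentrates
on the single orbit of `Ω`, then the stabilizer `Γ` of `Ω` is a lattice and `Ω` is a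
finite union of translates of `Γ` (so the process is a thickening of the lattice shift). -/
theorem statement16 {G : Type*} [Group G] [TopologicalSpace G] [IsTopologicalGroup G]
    [LocallyCompactSpace G] [SecondCountableTopology G] [MeasurableSpace G] [BorelSpace G]
    [(Measure.haar : Measure G).IsMulRightInvariant]
    (μ : Measure (Set G)) [IsProbabilityMeasure μ]
    (hsupp : ∀ᵐ ω ∂μ, IsClosed ω ∧ DiscreteTopology ↥ω)
    (hinv : ∀ g : G, μ.map (shift g) = μ)
    (herg : ∀ S : Set (Set G), MeasurableSet S →
      (∀ (g : G) (ω : Set G), ω ∈ S → shift g ω ∈ S) → μ S = 0 ∨ μ S = 1)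
    (U : Set G) (hU : MeasurableSet U) (hvol : Measure.haar U = 1)
    (hpos : 0 < expCount μ U) (hfin : expCount μ U < ⊤)
    (Ω : Set G) (hΩroot : (1 : G) ∈ Ω)
    (horbit : μ {ω | ∃ g : G, ω = shift g Ω} = 1) :
    (∃ H : Subgroup G, (H : Set G) = {g : G | shift g Ω = Ω}) ∧
      DiscreteTopology ↥{g : G | shift g Ω = Ω} ∧
      (∃ s : Set G, MeasurableSet s ∧ Measure.haar s < ⊤ ∧
        ∀ g : G, ∃! x : G, x ∈ s ∧ x⁻¹ * g ∈ {g : G | shift g Ω = Ω}) ∧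
      ∃ F : Finset G, Ω = {x : G | ∃ γ ∈ {g : G | shift g Ω = Ω}, ∃ f ∈ F, x = γ * f} :=
  statement16_general μ hsupp hinv U hU hvol hfin Ω hΩroot horbit
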